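/- For every nonnegative integer m and every real u > 0 with u ≠ 1, the integral ∫₀^∞ xᵐ/((x+1)^{m+1}(xu+1)) dx equals (-1)^m (u-1)^{-(m+1)} (log u - ∑_{j=1}^{m} (-1)^{j+1} (u-1)^j / j). -/

import Mathlib

/-!
Writing `f_m` for the integrand and `I_m` for its integral, the partial-fraction identity
`(u - 1) f_{m+1}(x) = x^m / (x+1)^(m+2) - f_m(x)`, together with
`∫₀^∞ x^m / (x+1)^(m+2) dx = 1/(m+1)` (an antiderivative is `(x/(x+1))^(m+1)/(m+1)`),
gives the recurrence `I_{m+1} = (1/(m+1) - I_m) / (u - 1)`, starting from `I_0 = log u / (u - 1)`.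
The closed form satisfies the same recurrence.
-/

open MeasureTheory Real Filter Set Topology

lemma tendsto_mul_add_div_add_one_atTop (a b : ℝ) :
    Tendsto (fun x : ℝ => (a * x + b) / (x + 1)) atTop (𝓝 a) := by
  have h : Tendsto (fun x : ℝ => a + (b - a) * (x + 1)⁻¹) atTop (𝓝 a) := by
    simpa using tendsto_const_nhds.add (tendsto_const_nhds.mul
      (tendsto_inv_atTop_zero.comp (tendsto_atTop_add_const_right _ (1 : ℝ) tendsto_id)))
  refine h.congr' ?_
  filter_upwards [eventually_gt_atTop (0 : ℝ)] with x hx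
  field_simp
  ring

section PowDivAddOnePow

variable (m : ℕ)

lemma hasDerivAt_div_add_one_pow_div {x : ℝ} (hx : x + 1 ≠ 0) :
    HasDerivAt (fun x : ℝ => (x / (x + 1)) ^ (m + 1) / (m + 1))
      (x ^ m / (x + 1) ^ (m + 2)) x := by
  have h := (((hasDerivAt_id x).div ((hasDerivAt_id x).add_const 1) hx).pow (m + 1)).div_const
    ((m : ℝ) + 1)
  refine h.congr_deriv ?_
  simp only [id, Pi.div_apply, Nat.add_sub_cancel, div_pow]
  push_cast
  field_simp
  ring

lemma tendsto_div_add_one_pow_div :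
    Tendsto (fun x : ℝ => (x / (x + 1)) ^ (m + 1) / (m + 1)) atTop (𝓝 (1 / (m + 1))) := by
  simpa using ((tendsto_mul_add_div_add_one_atTop 1 0).pow (m + 1)).div_const ((m : ℝ) + 1)

lemma integrableOn_Ioi_pow_div_add_one_pow :
    IntegrableOn (fun x : ℝ => x ^ m / (x + 1) ^ (m + 2)) (Ioi 0) :=
  integrableOn_Ioi_deriv_of_nonneg'
    (fun x (hx : 0 ≤ x) => hasDerivAt_div_add_one_pow_div m (by positivity))
    (fun x (hx : 0 < x) => by positivity) (tendsto_div_add_one_pow_div m)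

lemma integral_Ioi_pow_div_add_one_pow :
    ∫ x in Ioi (0 : ℝ), x ^ m / (x + 1) ^ (m + 2) = 1 / (m + 1) := by
  rw [integral_Ioi_of_hasDerivAt_of_tendsto'
    (fun x (hx : 0 ≤ x) => hasDerivAt_div_add_one_pow_div m (by positivity))
    (integrableOn_Ioi_pow_div_add_one_pow m) (tendsto_div_add_one_pow_div m)]
  simp

end PowDivAddOnePow

section Reciprocal

variable {u : ℝ}

lemma hasDerivAt_log_mul_add_one_sub_log_add_one_div (hu1 : u ≠ 1) {x : ℝ}
    (hx : x + 1 ≠ 0) (hxu : x * u + 1 ≠ 0) :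
    HasDerivAt (fun x : ℝ => (log (x * u + 1) - log (x + 1)) / (u - 1))
      (1 / ((x + 1) * (x * u + 1))) x := by
  have h := (((((hasDerivAt_id x).mul_const u).add_const 1).log hxu).sub
    (((hasDerivAt_id x).add_const 1).log hx)).div_const (u - 1)
  refine h.congr_deriv ?_
  have : u - 1 ≠ 0 := sub_ne_zero.mpr hu1
  simp only [id]
  rw [div_sub_div _ _ hxu hx]
  field_simp
  ring

lemma tendsto_log_mul_add_one_sub_log_add_one_div (hu : 0 < u) :
    Tendsto (fun x : ℝ => (log (x * u + 1) - log (x + 1)) / (u - 1)) atTop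
      (𝓝 (log u / (u - 1))) := by
  have h := ((continuousAt_log hu.ne').tendsto.comp
    (tendsto_mul_add_div_add_one_atTop u 1)).div_const (u - 1)
  refine h.congr' ?_
  filter_upwards [eventually_gt_atTop (0 : ℝ)] with x hx
  rw [Function.comp_apply, mul_comm u x, log_div (by positivity) (by positivity)]

lemma integrableOn_Ioi_one_div_add_one_mul (hu : 0 < u) (hu1 : u ≠ 1) :
    IntegrableOn (fun x : ℝ => 1 / ((x + 1) * (x * u + 1))) (Ioi 0) :=
  integrableOn_Ioi_deriv_of_nonneg'
    (fun x (hx : 0 ≤ x) =>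
      hasDerivAt_log_mul_add_one_sub_log_add_one_div hu1 (by positivity) (by positivity))
    (fun x (hx : 0 < x) => by positivity) (tendsto_log_mul_add_one_sub_log_add_one_div hu)

lemma integral_Ioi_one_div_add_one_mul (hu : 0 < u) (hu1 : u ≠ 1) :
    ∫ x in Ioi (0 : ℝ), 1 / ((x + 1) * (x * u + 1)) = log u / (u - 1) := by
  rw [integral_Ioi_of_hasDerivAt_of_tendsto'
    (fun x (hx : 0 ≤ x) =>
      hasDerivAt_log_mul_add_one_sub_log_add_one_div hu1 (by positivity) (by positivity))
    (integrableOn_Ioi_one_div_add_one_mul hu hu1) (tendsto_log_mul_add_one_sub_log_add_one_div hu)]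
  simp

end Reciprocal

noncomputable def modifiedLogIntegrand (m : ℕ) (u x : ℝ) : ℝ :=
  x ^ m / ((x + 1) ^ (m + 1) * (x * u + 1))

noncomputable def modifiedLogClosedForm (m : ℕ) (u : ℝ) : ℝ :=
  (-1 : ℝ) ^ m * (u - 1) ^ (-(m + 1 : ℤ)) *
    (log u - ∑ j ∈ Finset.Icc 1 m, (-1 : ℝ) ^ (j + 1) * (u - 1) ^ j / j)

section ModifiedLog

variable {u : ℝ}

lemma modifiedLogIntegrand_zero (u : ℝ) :
    modifiedLogIntegrand 0 u = fun x => 1 / ((x + 1) * (x * u + 1)) := by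
  funext x
  simp only [modifiedLogIntegrand, pow_zero, zero_add, pow_one]

lemma modifiedLogIntegrand_succ (m : ℕ) (hu1 : u ≠ 1) {x : ℝ} (hx : x + 1 ≠ 0)
    (hxu : x * u + 1 ≠ 0) :
    modifiedLogIntegrand (m + 1) u x =
      (x ^ m / (x + 1) ^ (m + 2) - modifiedLogIntegrand m u x) / (u - 1) := by
  have : u - 1 ≠ 0 := sub_ne_zero.mpr hu1
  unfold modifiedLogIntegrand
  field_simp
  ring

lemma modifiedLogIntegrand_succ_of_pos (m : ℕ) (hu : 0 < u) (hu1 : u ≠ 1) {x : ℝ}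
    (hx : 0 < x) :
    modifiedLogIntegrand (m + 1) u x =
      (x ^ m / (x + 1) ^ (m + 2) - modifiedLogIntegrand m u x) / (u - 1) :=
  modifiedLogIntegrand_succ m hu1 (by positivity) (by positivity)

lemma integrableOn_modifiedLogIntegrand (m : ℕ) (hu : 0 < u) (hu1 : u ≠ 1) :
    IntegrableOn (modifiedLogIntegrand m u) (Ioi 0) := by
  induction m with
  | zero => rw [modifiedLogIntegrand_zero]; exact integrableOn_Ioi_one_div_add_one_mul hu hu1
  | succ m ih =>
    exact IntegrableOn.congr_fun (((integrableOn_Ioi_pow_div_add_one_pow m).sub ih).div_const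
      (u - 1)) (fun x hx => (modifiedLogIntegrand_succ_of_pos m hu hu1 hx).symm) measurableSet_Ioi

lemma integral_modifiedLogIntegrand_succ (m : ℕ) (hu : 0 < u) (hu1 : u ≠ 1) :
    ∫ x in Ioi (0 : ℝ), modifiedLogIntegrand (m + 1) u x =
      (1 / (m + 1) - ∫ x in Ioi (0 : ℝ), modifiedLogIntegrand m u x) / (u - 1) := by
  rw [setIntegral_congr_fun measurableSet_Ioi
      (fun x hx => modifiedLogIntegrand_succ_of_pos m hu hu1 hx), integral_div,
    integral_sub (integrableOn_Ioi_pow_div_add_one_pow m)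
      (integrableOn_modifiedLogIntegrand m hu hu1),
    integral_Ioi_pow_div_add_one_pow]

lemma modifiedLogClosedForm_zero (u : ℝ) : modifiedLogClosedForm 0 u = log u / (u - 1) := by
  simp [modifiedLogClosedForm, div_eq_inv_mul]

lemma modifiedLogClosedForm_succ (m : ℕ) (hu1 : u ≠ 1) :
    modifiedLogClosedForm (m + 1) u = (1 / (m + 1) - modifiedLogClosedForm m u) / (u - 1) := by
  have : u - 1 ≠ 0 := sub_ne_zero.mpr hu1
  have hzpow : ∀ k : ℕ, (u - 1) ^ (-(k + 1 : ℤ)) = ((u - 1) ^ (k + 1))⁻¹ := fun k => by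
    rw [zpow_neg]; norm_cast
  simp only [modifiedLogClosedForm, Finset.sum_Icc_succ_top (Nat.le_add_left 1 m), hzpow]
  push_cast
  rcases neg_one_pow_eq_or ℝ m with h | h <;> simp only [pow_succ, h] <;> field_simp <;> ring

end ModifiedLog

theorem modified_log_closed_form (m : ℕ) (u : ℝ) (hu : 0 < u) (hu1 : u ≠ 1) :
    ∫ x in Set.Ioi (0:ℝ), x ^ m / ((x + 1) ^ (m + 1) * (x * u + 1)) =
      (-1 : ℝ) ^ m * (u - 1) ^ (-(m + 1 : ℤ)) *
        (Real.log u - ∑ j ∈ Finset.Icc 1 m, (-1 : ℝ) ^ (j + 1) * (u - 1) ^ j / j) := by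
  change ∫ x in Ioi (0 : ℝ), modifiedLogIntegrand m u x = modifiedLogClosedForm m u
  induction m with
  | zero => rw [modifiedLogClosedForm_zero, modifiedLogIntegrand_zero,
      integral_Ioi_one_div_add_one_mul hu hu1]
  | succ m ih =>
    rw [integral_modifiedLogIntegrand_succ m hu hu1, ih, modifiedLogClosedForm_succ m hu1]
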